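/- arXiv:1712.10319 — 3 statements merged into one kernel-verified Lean document; each statement's English description precedes it below -/
import Mathlib

section
/- Let k₁,…,kₙ ∈ ℝ, μ ∈ ℝ with 1 − μkᵢ ≠ 0 for all i, and A(μ) = ∏ᵢ(1 − μkᵢ). Then for each 1 ≤ s ≤ n, the s-th derivative of A at μ satisfies (−1)^s/(s!·A(μ)) · A^{(s)}(μ) = e_s(k₁/(1−μk₁), …, kₙ/(1−μkₙ)), the s-th elementary symmetric polynomial of the transformed values. -/
/-!
Expanding `A` about `μ` factor by factor gives
`A (μ + t) = A μ * ∏ i, (1 - t * kᵢ / (1 - μ * kᵢ))`, so the Taylor coefficient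
`A⁽ˢ⁾(μ) / s!` is `A μ` times the `t ^ s`-coefficient of that product, which is
`(-1) ^ s * e_s (kᵢ / (1 - μ * kᵢ))`.
-/

/-- The `r`-th elementary symmetric function of `k₁, …, kₙ`. -/
def esymm (n : ℕ) (k : Fin n → ℝ) (r : ℕ) : ℝ :=
  ∑ S ∈ Finset.univ.powersetCard r, ∏ i ∈ S, k i

open Finset Polynomial
open scoped Nat

namespace Polynomial

section Coeff

variable {R : Type*} {ι : Type*}

theorem coeff_prod_one_add_C_mul_X [CommSemiring R] (u : Finset ι) (c : ι → R) (s : ℕ) :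
    (∏ i ∈ u, (1 + C (c i) * X)).coeff s = ∑ t ∈ u.powersetCard s, ∏ i ∈ t, c i := by
  classical
  have hmonomial (t : Finset ι) : ∏ i ∈ t, C (c i) * X = C (∏ i ∈ t, c i) * X ^ #t := by
    rw [prod_mul_distrib, prod_const, map_prod]
  simp only [prod_one_add, hmonomial, finsetSum_coeff, coeff_C_mul_X_pow, powersetCard_eq_filter,
    sum_filter, eq_comm (a := s)]

theorem coeff_prod_one_sub_C_mul_X [CommRing R] (u : Finset ι) (c : ι → R) (s : ℕ) :
    (∏ i ∈ u, (1 - C (c i) * X)).coeff s = (-1) ^ s * ∑ t ∈ u.powersetCard s, ∏ i ∈ t, c i := by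
  simp only [sub_eq_add_neg, ← neg_mul, ← C_neg, coeff_prod_one_add_C_mul_X, mul_sum]
  refine sum_congr rfl fun t ht => ?_
  rw [prod_neg, (mem_powersetCard.mp ht).2]

end Coeff

section Taylor

variable {K : Type*} [Field K]

theorem taylor_one_sub_C_mul_X {a x : K} (h : 1 - x * a ≠ 0) :
    taylor x (1 - C a * X) = C (1 - x * a) * (1 - C (a / (1 - x * a)) * X) := by
  have hcancel : (1 - x * a) * (a / (1 - x * a)) = a := mul_div_cancel₀ a h
  rw [taylor_apply, sub_comp, one_comp, mul_comp, C_comp, X_comp, mul_sub, mul_one, ← mul_assoc,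
    ← C_mul, hcancel, C_sub, C_mul, C_1]
  ring

theorem taylor_prod_one_sub_C_mul_X {ι : Type*} (u : Finset ι) (k : ι → K) {x : K}
    (h : ∀ i ∈ u, 1 - x * k i ≠ 0) :
    taylor x (∏ i ∈ u, (1 - C (k i) * X))
      = C (∏ i ∈ u, (1 - x * k i)) * ∏ i ∈ u, (1 - C (k i / (1 - x * k i)) * X) := by
  rw [← taylorAlgHom_apply, map_prod, prod_congr rfl fun i hi => ?_, prod_mul_distrib, map_prod]
  exact taylor_one_sub_C_mul_X (h i hi)

end Taylor

section Deriv

variable {𝕜 : Type*} [NontriviallyNormedField 𝕜]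

theorem iteratedDeriv_eval (p : 𝕜[X]) (s : ℕ) (x : 𝕜) :
    iteratedDeriv s (fun t => p.eval t) x = (derivative^[s] p).eval x := by
  induction s generalizing p with
  | zero => simp
  | succ s ih =>
    have hderiv : deriv (fun t => p.eval t) = fun t => (derivative p).eval t := by
      funext t
      exact Polynomial.deriv p
    rw [iteratedDeriv_succ', hderiv, ih, Function.iterate_succ_apply]

theorem iteratedDeriv_eval_eq_factorial_mul_taylor_coeff (p : 𝕜[X]) (s : ℕ) (x : 𝕜) :
    iteratedDeriv s (fun t => p.eval t) x = s ! * (taylor x p).coeff s := by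
  rw [iteratedDeriv_eval, taylor_coeff, ← congrFun (factorial_smul_hasseDeriv (R := 𝕜) s) p,
    LinearMap.smul_apply, eval_smul, nsmul_eq_mul]

end Deriv

end Polynomial

theorem iteratedDeriv_prod_one_sub_mul {𝕜 ι : Type*} [NontriviallyNormedField 𝕜] [Fintype ι]
    (k : ι → 𝕜) {x : 𝕜} (hx : ∀ i, 1 - x * k i ≠ 0) (s : ℕ) :
    iteratedDeriv s (fun t => ∏ i, (1 - t * k i)) x
      = s ! * (∏ i, (1 - x * k i))
          * ((-1) ^ s * ∑ t ∈ univ.powersetCard s, ∏ i ∈ t, k i / (1 - x * k i)) := by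
  have hpoly : (fun t => ∏ i, (1 - t * k i)) = fun t => (∏ i, (1 - C (k i) * X)).eval t := by
    funext t
    simp only [eval_prod, eval_sub, eval_one, eval_mul, eval_C, eval_X, mul_comm]
  rw [hpoly, iteratedDeriv_eval_eq_factorial_mul_taylor_coeff,
    taylor_prod_one_sub_C_mul_X _ _ fun i _ => hx i, coeff_C_mul, coeff_prod_one_sub_C_mul_X,
    mul_assoc]

theorem iteratedDeriv_A_eq_esymm_of_transformed_general (n : ℕ) (k : Fin n → ℝ) (μ : ℝ)
    (hμ : ∀ i, 1 - μ * k i ≠ 0) (A : ℝ → ℝ) (hA : A = fun t => ∏ i, (1 - t * k i))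
    (s : ℕ) :
    (-1 : ℝ) ^ s / (s.factorial * A μ) * iteratedDeriv s A μ
      = esymm n (fun i => k i / (1 - μ * k i)) s := by
  subst hA
  have hden : (s ! : ℝ) * ∏ i, (1 - μ * k i) ≠ 0 :=
    mul_ne_zero (Nat.cast_ne_zero.mpr s.factorial_ne_zero) (prod_ne_zero_iff.mpr fun i _ => hμ i)
  rw [iteratedDeriv_prod_one_sub_mul k hμ, esymm, ← mul_assoc, div_mul_cancel₀ _ hden, ← mul_assoc,
    ← mul_pow, neg_one_mul, neg_neg, one_pow, one_mul]

theorem iteratedDeriv_A_eq_esymm_of_transformed (n : ℕ) (k : Fin n → ℝ) (μ : ℝ)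
    (hμ : ∀ i, 1 - μ * k i ≠ 0) (A : ℝ → ℝ) (hA : A = fun t => ∏ i, (1 - t * k i))
    (s : ℕ) (hs1 : 1 ≤ s) (hsn : s ≤ n) :
    (-1 : ℝ) ^ s / (s.factorial * A μ) * iteratedDeriv s A μ
      = esymm n (fun i => k i / (1 - μ * k i)) s :=
  iteratedDeriv_A_eq_esymm_of_transformed_general n k μ hμ A hA s
end

section
/- Let k₁,…,kₙ ∈ ℝ, μ ∈ ℝ with 1 − μkᵢ ≠ 0 for all i. Set kᵢ* = kᵢ/(1 − μkᵢ), H_r = C(n,r)⁻¹ e_r(k₁,…,kₙ), H_s* = C(n,s)⁻¹ e_s(k₁*,…,kₙ*), and A = ∏ᵢ(1 − μkᵢ). Then for each 0 ≤ s ≤ n: H_s* = (−1)^s/(s!·C(n,s)·A) · ∑_{r=s}^{n} (−1)^r · (r!/(r−s)!) · C(n,r) · H_r · μ^{r−s}. -/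
open Polynomial Finset

lemma coeff_prod_C_mul_X_add_one (n : ℕ) (k : Fin n → ℝ) (r : ℕ) :
    (∏ i, (C (k i) * X + 1) : ℝ[X]).coeff r = esymm n k r := by
  rw [prod_add]
  simp only [prod_const_one, mul_one, prod_mul_distrib, prod_const, ← map_prod,
    finsetSum_coeff, coeff_C_mul, coeff_X_pow]
  rw [esymm, powersetCard_eq_filter, sum_filter]
  refine sum_congr rfl fun t _ => ?_
  by_cases h : t.card = r
  · simp [h]
  · rw [if_neg (Ne.symm h), if_neg h, mul_zero]

lemma natDegree_prod_C_mul_X_add_one_le (n : ℕ) (k : Fin n → ℝ) :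
    (∏ i, (C (k i) * X + 1) : ℝ[X]).natDegree ≤ n := by
  refine (natDegree_prod_le _ _).trans ?_
  calc ∑ i : Fin n, (C (k i) * X + 1 : ℝ[X]).natDegree
      ≤ ∑ _i : Fin n, 1 := sum_le_sum fun i _ => natDegree_linear_le
    _ = n := by simp

lemma coeff_comp_X_add_C {R : Type*} [CommSemiring R] {p : R[X]} {N : ℕ}
    (hp : p.natDegree ≤ N) (a : R) (s : ℕ) :
    (p.comp (X + C a)).coeff s =
      ∑ r ∈ Icc s N, (r.choose s : R) * p.coeff r * a ^ (r - s) := by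
  have hdeg : (hasseDeriv s p).natDegree < N + 1 :=
    (natDegree_hasseDeriv_le p s).trans_lt (by omega)
  rw [← taylor_apply, taylor_coeff, eval_eq_sum_range' hdeg]
  simp only [hasseDeriv_coeff]
  have hvanish : ∀ r ∈ Ico s (s + (N + 1)), r ∉ Icc s N →
      (r.choose s : R) * p.coeff r * a ^ (r - s) = 0 := by
    intro r hr hrN
    simp only [mem_Ico, mem_Icc] at hr hrN
    rw [coeff_eq_zero_of_natDegree_lt (by omega), mul_zero, zero_mul]
  rw [sum_subset (fun r hr => by simp only [mem_Icc, mem_Ico] at hr ⊢; omega) hvanish,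
    sum_Ico_eq_sum_range, Nat.add_sub_cancel_left]
  refine sum_congr rfl fun m _ => ?_
  rw [add_comm s m, Nat.add_sub_cancel]

lemma C_mul_prod_parallel (n : ℕ) (k : Fin n → ℝ) (μ : ℝ) (hμ : ∀ i, 1 - μ * k i ≠ 0) :
    C (∏ i, (1 - μ * k i)) * ∏ i, (C (k i / (1 - μ * k i)) * X + 1) =
      (∏ i, (C (k i) * X + 1) : ℝ[X]).comp (X + C (-μ)) := by
  rw [map_prod, ← prod_mul_distrib, Polynomial.prod_comp]
  refine prod_congr rfl fun i _ => ?_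
  have hk : (1 - μ * k i) * (k i / (1 - μ * k i)) = k i := mul_div_cancel₀ _ (hμ i)
  simp only [add_comp, mul_comp, X_comp, C_comp, one_comp]
  rw [mul_add, mul_one, ← mul_assoc, ← map_mul, hk]
  simp only [map_sub, map_one, map_mul, map_neg]
  ring

lemma prod_mul_esymm_parallel (n : ℕ) (k : Fin n → ℝ) (μ : ℝ) (hμ : ∀ i, 1 - μ * k i ≠ 0)
    (s : ℕ) :
    (∏ i, (1 - μ * k i)) * esymm n (fun i => k i / (1 - μ * k i)) s =
      ∑ r ∈ Icc s n, (r.choose s : ℝ) * esymm n k r * (-μ) ^ (r - s) := by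
  rw [← coeff_prod_C_mul_X_add_one, ← coeff_C_mul, C_mul_prod_parallel n k μ hμ,
    coeff_comp_X_add_C (natDegree_prod_C_mul_X_add_one_le n k)]
  simp only [coeff_prod_C_mul_X_add_one]

lemma choose_mul_neg_pow {r s : ℕ} (hsr : s ≤ r) (μ : ℝ) :
    (r.choose s : ℝ) * (-μ) ^ (r - s) =
      (-1) ^ s / s.factorial * ((-1) ^ r * (r.factorial / (r - s).factorial) * μ ^ (r - s)) := by
  have hsign : (-1 : ℝ) ^ r = (-1) ^ s * (-1) ^ (r - s) := by
    rw [← pow_add, Nat.add_sub_cancel' hsr]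
  rw [Nat.cast_choose ℝ hsr, neg_pow, hsign]
  field_simp
  rw [← pow_mul, pow_mul', neg_one_sq, one_pow, mul_one]

theorem parallel_mean_curvature_functions_general (n : ℕ) (k : Fin n → ℝ) (μ : ℝ)
    (hμ : ∀ i, 1 - μ * k i ≠ 0)
    (kstar : Fin n → ℝ) (hks : ∀ i, kstar i = k i / (1 - μ * k i))
    (H Hstar : ℕ → ℝ)
    (hH : ∀ r, H r = ((n.choose r : ℝ))⁻¹ * esymm n k r)
    (hHs : ∀ s, Hstar s = ((n.choose s : ℝ))⁻¹ * esymm n kstar s)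
    (A : ℝ) (hA : A = ∏ i, (1 - μ * k i))
    (s : ℕ) :
    Hstar s = (-1 : ℝ) ^ s / (s.factorial * (n.choose s : ℝ) * A) *
      ∑ r ∈ Finset.Icc s n,
        (-1 : ℝ) ^ r * ((r.factorial : ℝ) / ((r - s).factorial : ℝ)) *
          (n.choose r : ℝ) * H r * μ ^ (r - s) := by
  have hA0 : A ≠ 0 := hA ▸ prod_ne_zero_iff.mpr fun i _ => hμ i
  have hkstar : kstar = fun i => k i / (1 - μ * k i) := funext hks
  have hsum : A * esymm n kstar s =
      (-1) ^ s / s.factorial * ∑ r ∈ Icc s n,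
        (-1 : ℝ) ^ r * (r.factorial / (r - s).factorial) * (n.choose r : ℝ) * H r * μ ^ (r - s) := by
    rw [hA, hkstar, prod_mul_esymm_parallel n k μ hμ, mul_sum]
    refine sum_congr rfl fun r hr => ?_
    obtain ⟨hsr, hrn⟩ := mem_Icc.mp hr
    have hnr : (n.choose r : ℝ) ≠ 0 := by exact_mod_cast (Nat.choose_pos hrn).ne'
    rw [mul_right_comm, choose_mul_neg_pow hsr, hH]
    field_simp
  rw [hHs, ← inv_mul_cancel_left₀ hA0 (esymm n kstar s), hsum]
  ring

theorem parallel_mean_curvature_functions (n : ℕ) (k : Fin n → ℝ) (μ : ℝ)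
    (hμ : ∀ i, 1 - μ * k i ≠ 0)
    (kstar : Fin n → ℝ) (hks : ∀ i, kstar i = k i / (1 - μ * k i))
    (H Hstar : ℕ → ℝ)
    (hH : ∀ r, H r = ((n.choose r : ℝ))⁻¹ * esymm n k r)
    (hHs : ∀ s, Hstar s = ((n.choose s : ℝ))⁻¹ * esymm n kstar s)
    (A : ℝ) (hA : A = ∏ i, (1 - μ * k i))
    (s : ℕ) (hsn : s ≤ n) :
    Hstar s = (-1 : ℝ) ^ s / (s.factorial * (n.choose s : ℝ) * A) *
      ∑ r ∈ Finset.Icc s n,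
        (-1 : ℝ) ^ r * ((r.factorial : ℝ) / ((r - s).factorial : ℝ)) *
          (n.choose r : ℝ) * H r * μ ^ (r - s) :=
  parallel_mean_curvature_functions_general n k μ hμ kstar hks H Hstar hH hHs A hA s
end

section
/- Let k₁,…,kₙ ∈ ℝ, μ ∈ ℝ with 1 − μkᵢ ≠ 0 for all i, kᵢ* = kᵢ/(1 − μkᵢ), A = ∏ᵢ(1 − μkᵢ), and H_r = C(n,r)⁻¹ e_r(k). Then the mean H* = (1/n)∑ᵢ kᵢ* satisfies H* = (1/(n·A)) · ∑_{r=1}^{n} (−1)^{r+1} · r · C(n,r) · H_r · μ^{r−1}. -/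
/-!
Clearing denominators, `A · ∑ kᵢ/(1 - μkᵢ) = ∑ᵢ kᵢ ∏_{j ≠ i} (1 - μkⱼ)`, which is `-d/dμ` of
`A = ∑_r (-μ)^r e_r`. Combinatorially: expanding each product over subsets `t` of the other
indices, every `r`-subset `{i} ∪ t` is hit exactly `r` times, which produces `r (-μ)^(r-1) e_r`.
-/

open Finset

namespace Finset

variable {α R : Type*} [CommRing R]

theorem prod_one_sub_mul_eq_sum_powerset (s : Finset α) (k : α → R) (μ : R) :
    ∏ j ∈ s, (1 - μ * k j) = ∑ t ∈ s.powerset, (-μ) ^ t.card * ∏ j ∈ t, k j := by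
  simp only [sub_eq_add_neg, ← neg_mul, prod_one_add, prod_mul_distrib, prod_const]

variable [DecidableEq α]

theorem sum_powerset_card_nsmul {M : Type*} [AddCommMonoid M] (s : Finset α)
    (F : Finset α → M) :
    ∑ t ∈ s.powerset, t.card • F t = ∑ i ∈ s, ∑ t ∈ (s.erase i).powerset, F (insert i t) := by
  have h_supsets (i : α) (hi : i ∈ s) :
      ∑ t ∈ s.powerset with i ∈ t, F t = ∑ t ∈ (s.erase i).powerset, F (insert i t) := by
    rw [sum_filter]
    nth_rw 1 [← insert_erase hi]
    rw [sum_powerset_insert (notMem_erase i s)]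
    simp only [mem_insert_self, if_true]
    rw [sum_eq_zero fun t ht ↦ if_neg fun hit ↦ notMem_erase i s (mem_powerset.1 ht hit),
      zero_add]
  calc ∑ t ∈ s.powerset, t.card • F t
      = ∑ t ∈ s.powerset, ∑ i ∈ t, F t := by simp only [sum_const]
    _ = ∑ i ∈ s, ∑ t ∈ s.powerset with i ∈ t, F t :=
        sum_comm' fun t i ↦ by
          simp only [mem_powerset, mem_filter]
          exact ⟨fun h ↦ ⟨h, h.1 h.2⟩, And.left⟩
    _ = _ := sum_congr rfl h_supsets

-- The truncated exponent `t.card - 1` is harmless: at `t = ∅` the factor `t.card` vanishes.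
theorem sum_mul_prod_erase_one_sub_mul (s : Finset α) (k : α → R) (μ : R) :
    ∑ i ∈ s, k i * ∏ j ∈ s.erase i, (1 - μ * k j)
      = ∑ t ∈ s.powerset, t.card • ((-μ) ^ (t.card - 1) * ∏ j ∈ t, k j) := by
  rw [sum_powerset_card_nsmul]
  refine sum_congr rfl fun i _ ↦ ?_
  rw [prod_one_sub_mul_eq_sum_powerset, mul_sum]
  refine sum_congr rfl fun t ht ↦ ?_
  have hit : i ∉ t := fun h ↦ notMem_erase i s (mem_powerset.1 ht h)
  rw [card_insert_of_notMem hit, Nat.add_sub_cancel, prod_insert hit, mul_left_comm]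

theorem prod_mul_sum_div_one_sub_mul {K : Type*} [Field K] (s : Finset α) (k : α → K) (μ : K)
    (hμ : ∀ i ∈ s, 1 - μ * k i ≠ 0) :
    (∏ j ∈ s, (1 - μ * k j)) * ∑ i ∈ s, k i / (1 - μ * k i)
      = ∑ i ∈ s, k i * ∏ j ∈ s.erase i, (1 - μ * k j) := by
  rw [mul_sum]
  refine sum_congr rfl fun i hi ↦ ?_
  rw [← mul_prod_erase s _ hi]
  field_simp [hμ i hi]

end Finset

theorem sum_mul_prod_erase_one_sub_mul_eq_sum_esymm (n : ℕ) (k : Fin n → ℝ) (μ : ℝ) :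
    ∑ i, k i * ∏ j ∈ univ.erase i, (1 - μ * k j)
      = ∑ r ∈ Icc 1 n, (-1 : ℝ) ^ (r + 1) * r * esymm n k r * μ ^ (r - 1) := by
  have h_term (r : ℕ) : ∑ t ∈ univ.powersetCard r, t.card • ((-μ) ^ (t.card - 1) * ∏ j ∈ t, k j)
      = (-1 : ℝ) ^ (r + 1) * r * esymm n k r * μ ^ (r - 1) := by
    calc ∑ t ∈ univ.powersetCard r, t.card • ((-μ) ^ (t.card - 1) * ∏ j ∈ t, k j)
        = ∑ t ∈ univ.powersetCard r, r • ((-μ) ^ (r - 1) * ∏ j ∈ t, k j) :=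
          sum_congr rfl fun t ht ↦ by rw [(mem_powersetCard.1 ht).2]
      _ = r • ((-μ) ^ (r - 1) * esymm n k r) := by rw [esymm, mul_sum, smul_sum]
      _ = _ := by
        rcases r with _ | m
        · simp
        · rw [nsmul_eq_mul, Nat.add_sub_cancel, neg_pow]
          push_cast
          ring
  rw [sum_mul_prod_erase_one_sub_mul, sum_powerset, card_univ, Fintype.card_fin,
    Nat.range_succ_eq_Icc_zero, ← insert_Icc_add_one_left_eq_Icc n.zero_le, sum_insert (by simp)]
  simp only [h_term]
  simp

theorem parallel_relative_mean_curvature (n : ℕ) (k : Fin n → ℝ) (μ : ℝ)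
    (hμ : ∀ i, 1 - μ * k i ≠ 0)
    (kstar : Fin n → ℝ) (hks : ∀ i, kstar i = k i / (1 - μ * k i))
    (A : ℝ) (hA : A = ∏ i, (1 - μ * k i))
    (H : ℕ → ℝ) (hH : ∀ r, H r = ((n.choose r : ℝ))⁻¹ * esymm n k r)
    (Hstar : ℝ) (hHstar : Hstar = (n : ℝ)⁻¹ * ∑ i, kstar i) :
    Hstar = (1 / (n * A)) *
      ∑ r ∈ Finset.Icc 1 n,
        (-1 : ℝ) ^ (r + 1) * r * (n.choose r : ℝ) * H r * μ ^ (r - 1) := by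
  have hA_ne : A ≠ 0 := hA ▸ prod_ne_zero_iff.2 fun i _ ↦ hμ i
  have h_rhs : ∑ r ∈ Icc 1 n, (-1 : ℝ) ^ (r + 1) * r * (n.choose r : ℝ) * H r * μ ^ (r - 1)
      = ∑ r ∈ Icc 1 n, (-1 : ℝ) ^ (r + 1) * r * esymm n k r * μ ^ (r - 1) := by
    refine sum_congr rfl fun r hr ↦ ?_
    have h_choose : (n.choose r : ℝ) ≠ 0 := by
      exact_mod_cast (Nat.choose_pos (mem_Icc.1 hr).2).ne'
    rw [hH r, mul_assoc _ (n.choose r : ℝ), mul_inv_cancel_left₀ h_choose]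
  have h_sum_star : A * ∑ i, kstar i = ∑ i, k i * ∏ j ∈ univ.erase i, (1 - μ * k j) := by
    rw [hA, ← prod_mul_sum_div_one_sub_mul univ k μ fun i _ ↦ hμ i]
    simp only [hks]
  rw [hHstar, h_rhs, ← sum_mul_prod_erase_one_sub_mul_eq_sum_esymm, ← h_sum_star]
  field_simp
end
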